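/- Let N = 2M ≥ 8 be an even integer and let γ satisfy 0 < γ < 7/3 − √5. Then there exist λ ∈ (−λ_c, λ_c) and x* ∈ ℝ^N with Σ_{i=1}^N x*_i = 0, satisfying (x*_i)³ − x*_i − (γ/2)(x*_{i+1} − 2x*_i + x*_{i−1}) = λ for all i (indices cyclic), such that exactly M coordinates of x* lie in the interval [α_max − √γ, α_max] and exactly M coordinates lie in [α_min, α_min + √γ], where α_min and α_max are the smallest and largest real roots of ξ³ − ξ − λ. Moreover x* is a local minimum of the restriction of V_γ to the hyperplane S. (Persistence of the particle/hole family B₀ up to γ = 7/3 − √5 ≈ 0.097.) -/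
import Mathlib


/-- The coupled potential `V_γ(x) = Σᵢ (xᵢ⁴/4 - xᵢ²/2) + (γ/4) Σᵢ (x_{i+1} - xᵢ)²`
on the periodic lattice of `N` sites. -/
noncomputable def Vg (N : ℕ) [NeZero N] (γ : ℝ) (x : Fin N → ℝ) : ℝ :=
  (∑ i, ((x i) ^ 4 / 4 - (x i) ^ 2 / 2)) + γ / 4 * ∑ i, (x (i + 1) - x i) ^ 2

lemma card_even_range (M : ℕ) :
    ((Finset.range (2*M)).filter (fun k => Even k)).card = M := by
  induction M with
  | zero => simp
  | succ m ih =>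
    have h2 : 2 * (m+1) = (2*m + 1) + 1 := by ring
    rw [h2, Finset.range_add_one, Finset.range_add_one, Finset.filter_insert, Finset.filter_insert]
    have ho : Even (2*m) := even_two_mul m
    simp [Nat.even_add_one, ih, ho, Finset.card_insert_of_notMem]

lemma card_even_fin (N M : ℕ) [NeZero N] (hNM : N = 2*M) :
    (Finset.univ.filter (fun i : Fin N => Even i.val)).card = M := by
  rw [← card_even_range M, ← hNM]
  apply Finset.card_bij (fun (a : Fin N) _ => a.val)
  · intro a ha
    simp only [Finset.mem_filter, Finset.mem_range, Finset.mem_univ, true_and] at ha ⊢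
    exact ⟨a.isLt, ha⟩
  · intro a _ b _ hab; exact Fin.ext hab
  · intro b hb
    simp only [Finset.mem_filter, Finset.mem_range] at hb
    exact ⟨⟨b, hb.1⟩, by simp [hb.2], rfl⟩

lemma parity_succ (N : ℕ) [NeZero N] (hN : 2 ∣ N) (h1 : 1 < N) (i : Fin N) :
    Even ((i+1 : Fin N)).val ↔ ¬ Even i.val := by
  have hv : ((i+1 : Fin N)).val = (i.val + 1) % N := by
    rw [Fin.add_def]
    simp [Fin.val_one', Nat.mod_eq_of_lt h1]
  rw [hv, Nat.even_iff, Nat.even_iff, Nat.mod_mod_of_dvd _ hN, Nat.add_mod]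
  omega

lemma Vg_sum (N : ℕ) [NeZero N] (γ : ℝ) (z : Fin N → ℝ) :
    Vg N γ z = ∑ i, ((z i)^4/4 - (z i)^2/2 + γ/4*(z (i + 1) - z i)^2) := by
  unfold Vg; rw [Finset.mul_sum, ← Finset.sum_add_distrib]

lemma key_min (N : ℕ) [NeZero N] (γ : ℝ) (hγ1 : 0 < γ) (hγ6 : γ < 1/6)
    (x y : Fin N → ℝ) (hflip : ∀ i, x (i+1) = -(x i))
    (hsq : ∀ i, (x i)^2 = 1 - 2*γ) (habs : ∀ i, |x i| ≤ 1)
    (hclose : ∀ i, |y i - x i| ≤ 1/2) : Vg N γ x ≤ Vg N γ y := by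
  have hflip' : ∀ i : Fin N, x (i-1) = -(x i) := by
    intro i
    have := hflip (i-1)
    rw [sub_add_cancel] at this
    linarith
  have hre : ∑ i, x i * (y (i+1) - x (i+1)) = -∑ i, x i * (y i - x i) := by
    have h0 := Equiv.sum_comp (Equiv.addRight (1:Fin N))
      (fun j => x (j-1) * (y j - x j))
    simp only [Equiv.coe_addRight, add_sub_cancel_right] at h0
    rw [h0, ← Finset.sum_neg_distrib]
    exact Finset.sum_congr rfl (fun j _ => by rw [hflip' j]; ring
    )
  have hsum : ∑ i, ((y i)^4/4 - (y i)^2/2 + γ/4*(y (i + 1) - y i)^2)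
      = ∑ i, (((x i)^4/4 - (x i)^2/2 + γ/4*(x (i + 1) - x i)^2)
          + ((1-3*γ)*(y i - x i)^2 + x i*(y i - x i)^3 + (y i - x i)^4/4)
          + γ/4*((y (i+1) - x (i+1)) - (y i - x i))^2
          - γ*(x i*(y (i+1) - x (i+1)))
          - γ*(x i*(y i - x i))) := by
    refine Finset.sum_congr rfl (fun i _ => ?_)
    rw [hflip i]
    linear_combination (x i * (y i - x i) + (3/2)*(y i - x i)^2) * hsq i
  have key1 : Vg N γ y = Vg N γ x
      + (∑ i, ((1-3*γ)*(y i - x i)^2 + x i*(y i - x i)^3 + (y i - x i)^4/4))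
      + γ/4 * ∑ i, ((y (i+1) - x (i+1)) - (y i - x i))^2 := by
    rw [Vg_sum, hsum, Vg_sum]
    simp only [Finset.sum_add_distrib, Finset.sum_sub_distrib, ← Finset.mul_sum]
    rw [hre]; ring
  have t1 : 0 ≤ ∑ i, ((1-3*γ)*(y i - x i)^2 + x i*(y i - x i)^3 + (y i - x i)^4/4) := by
    refine Finset.sum_nonneg (fun i _ => ?_)
    have hs := abs_le.mp (habs i)
    have hh := abs_le.mp (hclose i)
    have hsh : |x i * (y i - x i)| ≤ 1/2 := by
      rw [abs_mul]
      calc |x i| * |y i - x i| ≤ 1 * (1/2) :=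
        mul_le_mul (habs i) (hclose i) (abs_nonneg _) zero_le_one
      _ = 1/2 := by norm_num
    have hsh' := (abs_le.mp hsh).1
    have hmul := mul_le_mul_of_nonneg_right hsh' (sq_nonneg (y i - x i))
    nlinarith [sq_nonneg (y i - x i), sq_nonneg ((y i - x i)^2)]
  have t2 : 0 ≤ γ/4 * ∑ i, ((y (i+1) - x (i+1)) - (y i - x i))^2 :=
    mul_nonneg (by linarith) (Finset.sum_nonneg (fun i _ => sq_nonneg _))
  linarith [key1]

/-- Persistence of the particle/hole family `B₀` for
`0 < γ < 7/3 - √5`: there is a constrained stationary point with `M` coordinates near the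
largest root and `M` coordinates near the smallest root of `ξ³ - ξ - λ`, which is a local
minimum of `V_γ` restricted to the zero-mean hyperplane. -/
theorem stmt_6 (N M : ℕ) (hNM : N = 2 * M) (hM : 4 ≤ M) [NeZero N]
    (γ : ℝ) (hγ1 : 0 < γ) (hγ2 : γ < 7 / 3 - Real.sqrt 5) :
    ∃ lam : ℝ, |lam| < 2 / (3 * Real.sqrt 3) ∧
    ∃ x : Fin N → ℝ, (∑ i, x i = 0) ∧
      (∀ i, (x i) ^ 3 - x i - γ / 2 * (x (i + 1) - 2 * x i + x (i - 1)) = lam) ∧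
      (∃ αmin αmax : ℝ, IsLeast {ξ : ℝ | ξ ^ 3 - ξ = lam} αmin ∧
        IsGreatest {ξ : ℝ | ξ ^ 3 - ξ = lam} αmax ∧
        {i : Fin N | αmax - Real.sqrt γ ≤ x i ∧ x i ≤ αmax}.ncard = M ∧
        {i : Fin N | αmin ≤ x i ∧ x i ≤ αmin + Real.sqrt γ}.ncard = M) ∧
      IsLocalMinOn (Vg N γ) {y : Fin N → ℝ | ∑ i, y i = 0} x := by
  -- numeric facts
  have h5 : Real.sqrt 5 ^ 2 = 5 := Real.sq_sqrt (by norm_num)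
  have hγ6 : γ < 1/6 := by nlinarith [Real.sqrt_nonneg 5]
  have hdvd : 2 ∣ N := ⟨M, hNM⟩
  have h1N : 1 < N := by omega
  set a := Real.sqrt (1 - 2*γ) with ha_def
  have ha2 : a^2 = 1 - 2*γ := Real.sq_sqrt (by linarith)
  have ha0 : 0 < a := Real.sqrt_pos.mpr (by linarith)
  have ha1 : a ≤ 1 := by nlinarith
  have hsg : Real.sqrt γ ^ 2 = γ := Real.sq_sqrt hγ1.le
  have hsg0 : 0 ≤ Real.sqrt γ := Real.sqrt_nonneg γ
  have hsg1 : Real.sqrt γ < 1 := by nlinarith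
  -- 1 - √γ ≤ a
  have haγ : 1 - Real.sqrt γ ≤ a := by nlinarith [sq_nonneg (a - (1 - Real.sqrt γ)), sq_nonneg (a + (1 - Real.sqrt γ))]
  -- the configuration
  set x : Fin N → ℝ := fun i => if Even i.val then a else -a with hx_def
  have hflip : ∀ i : Fin N, x (i+1) = -(x i) := by
    intro i
    have hp := parity_succ N hdvd h1N i
    by_cases hi : Even i.val
    · have h2 : ¬ Even ((i+1 : Fin N)).val := fun h => (hp.mp h) hi
      simp [hx_def, hi, h2]
    · have h2 : Even ((i+1 : Fin N)).val := hp.mpr hi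
      simp [hx_def, hi, h2]
  have hflip' : ∀ i : Fin N, x (i-1) = -(x i) := by
    intro i
    have := hflip (i-1)
    rw [sub_add_cancel] at this
    linarith
  have hsq : ∀ i, (x i)^2 = 1 - 2*γ := by
    intro i; by_cases hi : Even i.val <;> simp [hx_def, hi, ha2]
  have habs : ∀ i, |x i| ≤ 1 := by
    intro i; by_cases hi : Even i.val <;> simp [hx_def, hi, abs_of_pos ha0, ha1, abs_of_neg, neg_neg]
  -- counting
  have hcard_even : (Finset.univ.filter (fun i : Fin N => Even i.val)).card = M :=
    card_even_fin N M hNM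
  have hcard_odd : (Finset.univ.filter (fun i : Fin N => ¬ Even i.val)).card = M := by
    have h := Finset.card_filter_add_card_filter_not (s := (Finset.univ : Finset (Fin N)))
      (p := fun i : Fin N => Even i.val)
    simp only [Finset.card_univ, Fintype.card_fin] at h
    omega
  refine ⟨0, ?_, x, ?_, ?_, ⟨-1, 1, ?_, ?_, ?_, ?_⟩, ?_⟩
  · have h3 : Real.sqrt 3 > 0 := Real.sqrt_pos.mpr (by norm_num)
    simp only [abs_zero]
    positivity
  · -- sum zero
    rw [hx_def, Finset.sum_ite, Finset.sum_const, Finset.sum_const, hcard_even, hcard_odd]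
    simp [nsmul_eq_mul]
  · -- stationarity
    intro i
    rw [hflip i, hflip' i]
    linear_combination (x i) * hsq i
  · -- IsLeast
    constructor
    · show (-1:ℝ)^3 - (-1) = 0; norm_num
    · intro ξ hξ
      simp only [Set.mem_setOf_eq] at hξ
      by_contra hc
      push_neg at hc
      nlinarith [sq_nonneg ξ, sq_nonneg (ξ+1)]
  · -- IsGreatest
    constructor
    · show (1:ℝ)^3 - 1 = 0; norm_num
    · intro ξ hξ
      simp only [Set.mem_setOf_eq] at hξ
      by_contra hc
      push_neg at hc
      nlinarith [sq_nonneg ξ, sq_nonneg (ξ-1)]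
  · -- count near αmax = 1
    have hset : {i : Fin N | 1 - Real.sqrt γ ≤ x i ∧ x i ≤ 1} = {i : Fin N | Even i.val} := by
      ext i
      by_cases hi : Even i.val <;>
        simp only [Set.mem_setOf_eq, hx_def, hi, if_true, if_false]
      · exact iff_of_true ⟨haγ, ha1⟩ trivial
      · refine iff_of_false (fun hcon => ?_) not_false
        have := hcon.1; linarith
    rw [hset, Set.ncard_eq_toFinset_card', Set.toFinset_setOf]
    exact hcard_even
  · -- count near αmin = -1
    have hset : {i : Fin N | -1 ≤ x i ∧ x i ≤ -1 + Real.sqrt γ} = {i : Fin N | ¬ Even i.val} := by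
      ext i
      by_cases hi : Even i.val <;>
        simp only [Set.mem_setOf_eq, hx_def, hi, if_true, if_false]
      · refine iff_of_false (fun hcon => ?_) (by simp)
        have := hcon.2; linarith
      · exact iff_of_true ⟨by linarith, by linarith⟩ (by simp)
    rw [hset, Set.ncard_eq_toFinset_card', Set.toFinset_setOf]
    exact hcard_odd
  · -- local min
    apply IsLocalMin.on
    rw [IsLocalMin, IsMinFilter]
    filter_upwards [Metric.ball_mem_nhds x (by norm_num : (0:ℝ) < 1/2)] with y hy
    apply key_min N γ hγ1 hγ6 x y hflip hsq habs
    intro i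
    have hd : dist (y i) (x i) ≤ dist y x := dist_le_pi_dist y x i
    rw [Metric.mem_ball] at hy
    rw [Real.dist_eq] at hd
    linarith
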